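/- Let k be a field and let S ⊆ ℤ^d be the submonoid generated by elements s₁,…,sₙ which generate ℤ^d as a group. Then the localization of the monoid algebra k[S] at the single monomial t^{s₁+⋯+sₙ} is isomorphic as a k-algebra to the group algebra k[ℤ^d] (the Laurent polynomial algebra in d variables). In particular, k[ℤ^d] is obtained from k[S] by localisation, so the torus Spec k[ℤ^d] ≅ (k^×)^d is a principal open, Zariski-dense subset of the affine toric variety Spec k[S]. -/

import Mathlib

/-!
Write `S` for the monoid generated by the `sᵢ` and `σ = ∑ sᵢ`. Since `-sᵢ + σ = ∑_{j ≠ i} sⱼ ∈ S`,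
every element of the group generated by the `sᵢ`, i.e. of `ℤ^d`, is moved into `S` by adding a
suitable multiple of `σ`. Consequently every Laurent polynomial becomes a polynomial in `k[S]`
after multiplication by a power of the unit `t^σ`, which exhibits `k[ℤ^d]` as `k[S][t^{-σ}]`.
-/

open AddMonoidAlgebra

theorem AddSubmonoid.exists_add_nsmul_sum_mem_closure {G ι : Type*} [AddCommGroup G] [Fintype ι]
    (s : ι → G) (hgen : AddSubgroup.closure (Set.range s) = ⊤) (g : G) :
    ∃ m : ℕ, g + m • ∑ i, s i ∈ AddSubmonoid.closure (Set.range s) := by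
  classical
  set S := AddSubmonoid.closure (Set.range s)
  let T : AddSubmonoid G :=
    { carrier := {g | ∃ m : ℕ, g + m • ∑ i, s i ∈ S}
      zero_mem' := ⟨0, by simp⟩
      add_mem' := by
        rintro g h ⟨m, hm⟩ ⟨n, hn⟩
        refine ⟨m + n, ?_⟩
        convert S.add_mem hm hn using 1
        rw [add_nsmul]
        abel }
  have hneg : ∀ i, -s i ∈ T := fun i => ⟨1, by
    rw [one_nsmul, ← Finset.add_sum_erase _ s (Finset.mem_univ i), neg_add_cancel_left]
    exact S.sum_mem fun j _ => AddSubmonoid.subset_closure ⟨j, rfl⟩⟩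
  have hT : AddSubmonoid.closure (Set.range s ∪ -Set.range s) ≤ T := by
    refine AddSubmonoid.closure_le.2 (Set.union_subset ?_ ?_)
    · rintro _ ⟨i, rfl⟩
      exact ⟨0, by simpa using AddSubmonoid.subset_closure (Set.mem_range_self i)⟩
    · rintro g ⟨i, hi⟩
      rw [← neg_neg g, ← hi]
      exact hneg i
  rw [← AddSubgroup.closure_toAddSubmonoid, hgen] at hT
  exact hT (AddSubgroup.mem_top g)

namespace AddMonoidAlgebra

variable {k G : Type*} [CommSemiring k] [AddCommGroup G]

theorem isUnit_single_one (g : G) : IsUnit (single g (1 : k)) := by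
  simpa using (Group.isUnit (Multiplicative.ofAdd g)).map (of k G)

variable {S : AddSubmonoid G} (σ : S)

theorem mapDomainRingHom_single_pow (m : ℕ) :
    mapDomainRingHom k S.subtype (single σ (1 : k)) ^ m = single (m • (σ : G)) 1 := by
  rw [mapDomainRingHom_apply, mapDomain_single, single_pow, one_pow]
  rfl

theorem exists_mul_pow_eq_mapDomainRingHom (h : ∀ g : G, ∃ m : ℕ, g + m • (σ : G) ∈ S)
    (z : k[G]) : ∃ (a : k[S]) (m : ℕ),
      z * mapDomainRingHom k S.subtype (single σ 1) ^ m = mapDomainRingHom k S.subtype a := by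
  set φ := mapDomainRingHom k S.subtype
  induction z using induction_linear with
  | zero => exact ⟨0, 0, by simp⟩
  | add z w hz hw =>
    obtain ⟨a, m, ha⟩ := hz
    obtain ⟨b, n, hb⟩ := hw
    refine ⟨a * single σ 1 ^ n + b * single σ 1 ^ m, m + n, ?_⟩
    rw [map_add, map_mul, map_mul, map_pow, map_pow, ← ha, ← hb]
    ring
  | single g c =>
    obtain ⟨m, hm⟩ := h g
    refine ⟨single ⟨g + m • (σ : G), hm⟩ c, m, ?_⟩
    rw [mapDomainRingHom_single_pow, single_mul_single, mul_one, mapDomainRingHom_apply,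
      mapDomain_single]
    rfl

theorem isLocalization_away_single (h : ∀ g : G, ∃ m : ℕ, g + m • (σ : G) ∈ S) :
    letI := (mapDomainRingHom k S.subtype).toAlgebra
    IsLocalization.Away (single σ (1 : k)) k[G] := by
  let := (mapDomainRingHom k S.subtype).toAlgebra
  refine ⟨?_, ?_, ?_⟩
  · rintro ⟨_, m, rfl⟩
    rw [RingHom.algebraMap_toAlgebra, map_pow, mapDomainRingHom_single_pow]
    exact isUnit_single_one _
  · intro z
    obtain ⟨a, m, ha⟩ := exists_mul_pow_eq_mapDomainRingHom σ h z
    exact ⟨⟨a, _, m, rfl⟩, by rwa [RingHom.algebraMap_toAlgebra, map_pow]⟩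
  · intro a b hab
    exact ⟨1, by rw [mapDomain_injective Subtype.coe_injective hab]⟩

theorem nonempty_localizationAway_algEquiv (h : ∀ g : G, ∃ m : ℕ, g + m • (σ : G) ∈ S) :
    Nonempty (Localization.Away (single σ (1 : k)) ≃ₐ[k] k[G]) := by
  let := (mapDomainRingHom k S.subtype).toAlgebra
  have := isLocalization_away_single (k := k) σ h
  have : IsScalarTower k k[S] k[G] :=
    .of_algebraMap_eq' (mapDomainAlgHom k k S.subtype).comp_algebraMap.symm
  exact ⟨(Localization.algEquiv _ _).restrictScalars k⟩

end AddMonoidAlgebra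

/-- Let `S ⊆ ℤ^d` be the submonoid generated by `s₁,…,sₙ`, which generate `ℤ^d` as a group.
Then the localization of the monoid algebra `k[S]` at the single monomial `t^{s₁+⋯+sₙ}` is
isomorphic as a `k`-algebra to the group algebra `k[ℤ^d]` of Laurent polynomials; in
particular the torus `Spec k[ℤ^d]` is a principal open, Zariski-dense subset of the affine
toric variety `Spec k[S]`. -/
theorem statement17 (k : Type*) [Field k] (d n : ℕ) (s : Fin n → (Fin d → ℤ))
    (hgen : AddSubgroup.closure (Set.range s) = ⊤) :
    Nonempty
      (Localization.Away
          (AddMonoidAlgebra.single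
            (⟨∑ i, s i,
              AddSubmonoid.sum_mem _ fun i _ => AddSubmonoid.subset_closure ⟨i, rfl⟩⟩ :
              AddSubmonoid.closure (Set.range s)) (1 : k)) ≃ₐ[k]
        AddMonoidAlgebra k (Fin d → ℤ)) :=
  nonempty_localizationAway_algEquiv _ (AddSubmonoid.exists_add_nsmul_sum_mem_closure s hgen)
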